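/- Let G ∈ ℝ^{n×n}, let U ∈ ℝ^{n×m} be a data matrix, ū = (1/m) U 𝟙 its column average, and P̄ = U − ū 𝟙ᵀ. The minimizers over W ∈ ℝ^{n×n}, b ∈ ℝ^n of J(W, b) = ‖G U − (W U + b 𝟙ᵀ)‖_F² include W* = G P̄ P̄†, b* = G (I − P̄ P̄†) ū, where P̄† is the Moore–Penrose pseudoinverse; i.e., J(W*, b*) ≤ J(W, b) for all W, b. -/

import Mathlib

/-!
The optimum is an exact fit, so its loss is `0`, while every loss is a trace `Rᵀ R ≥ 0`.
Exactness: `U = P̄ + ū 𝟙ᵀ`, and `P̄ P̄† P̄ = P̄` gives `W* P̄ = G P̄`, while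
`W* ū 𝟙ᵀ + b* 𝟙ᵀ = G P̄ P̄† ū 𝟙ᵀ + G (I − P̄ P̄†) ū 𝟙ᵀ = G ū 𝟙ᵀ`.
-/

open Matrix

def IsMoorePenroseInv {n m : ℕ} (A : Matrix (Fin n) (Fin m) ℝ)
    (Adag : Matrix (Fin m) (Fin n) ℝ) : Prop :=
  A * Adag * A = A ∧ Adag * A * Adag = Adag ∧
    (A * Adag)ᵀ = A * Adag ∧ (Adag * A)ᵀ = Adag * A

theorem mul_mul_add_vecMulVec_eq_of_mul_mul_self {l k n R : Type*} [Fintype l] [Fintype k]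
    [DecidableEq l] [Ring R] (G : Matrix n l R) (P : Matrix l k R) (Pdag : Matrix k l R)
    (hP : P * Pdag * P = P) (u : l → R) (v : k → R) :
    G * P * Pdag * (P + vecMulVec u v) + vecMulVec ((G * (1 - P * Pdag)) *ᵥ u) v =
      G * (P + vecMulVec u v) := by
  have hP' : P * (Pdag * P) = P := by rw [← Matrix.mul_assoc, hP]
  rw [← mul_vecMulVec]
  simp only [Matrix.mul_add, Matrix.mul_sub, Matrix.sub_mul, Matrix.mul_one, Matrix.mul_assoc,
    hP']
  abel

theorem trace_transpose_mul_self_nonneg {m n : Type*} [Fintype m] [Fintype n]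
    (A : Matrix m n ℝ) : 0 ≤ (Aᵀ * A).trace := by
  simpa only [conjTranspose_eq_transpose_of_trivial] using
    (posSemidef_conjTranspose_mul_self A).trace_nonneg

theorem stmt_6_general {n m : ℕ} (G : Matrix (Fin n) (Fin n) ℝ) (U : Matrix (Fin n) (Fin m) ℝ)
    (ubar : Fin n → ℝ)
    (Pbar : Matrix (Fin n) (Fin m) ℝ) (hPbar : Pbar = U - vecMulVec ubar (fun _ => 1))
    (Pdag : Matrix (Fin m) (Fin n) ℝ) (hPdag : IsMoorePenroseInv Pbar Pdag)
    (J : Matrix (Fin n) (Fin n) ℝ → (Fin n → ℝ) → ℝ)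
    (hJ : ∀ W b, J W b =
      ((G * U - (W * U + vecMulVec b (fun _ => 1)))ᵀ *
        (G * U - (W * U + vecMulVec b (fun _ => 1)))).trace)
    (Wstar : Matrix (Fin n) (Fin n) ℝ) (hW : Wstar = G * Pbar * Pdag)
    (bstar : Fin n → ℝ) (hb : bstar = (G * (1 - Pbar * Pdag)).mulVec ubar) :
    ∀ W b, J Wstar bstar ≤ J W b := by
  intro W b
  have hU : U = Pbar + vecMulVec ubar (fun _ => 1) := by rw [hPbar, sub_add_cancel]
  have hfit : Wstar * U + vecMulVec bstar (fun _ => 1) = G * U := by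
    rw [hW, hb, hU]
    exact mul_mul_add_vecMulVec_eq_of_mul_mul_self G Pbar Pdag hPdag.1 ubar _
  rw [hJ, hJ, hfit, sub_self, transpose_zero, Matrix.zero_mul, trace_zero]
  exact trace_transpose_mul_self_nonneg _

/-- The pair `W* = G P̄ P̄†`, `b* = G (I − P̄ P̄†) ū` minimizes the squared
Frobenius-norm loss `J(W,b) = ‖GU − (WU + b𝟙ᵀ)‖_F²` over all `W, b`. -/
theorem stmt_6 {n m : ℕ} (G : Matrix (Fin n) (Fin n) ℝ) (U : Matrix (Fin n) (Fin m) ℝ)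
    (ubar : Fin n → ℝ) (hubar : ubar = (1 / (m : ℝ)) • U.mulVec (fun _ => 1))
    (Pbar : Matrix (Fin n) (Fin m) ℝ) (hPbar : Pbar = U - vecMulVec ubar (fun _ => 1))
    (Pdag : Matrix (Fin m) (Fin n) ℝ) (hPdag : IsMoorePenroseInv Pbar Pdag)
    (J : Matrix (Fin n) (Fin n) ℝ → (Fin n → ℝ) → ℝ)
    (hJ : ∀ W b, J W b =
      ((G * U - (W * U + vecMulVec b (fun _ => 1)))ᵀ *
        (G * U - (W * U + vecMulVec b (fun _ => 1)))).trace)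
    (Wstar : Matrix (Fin n) (Fin n) ℝ) (hW : Wstar = G * Pbar * Pdag)
    (bstar : Fin n → ℝ) (hb : bstar = (G * (1 - Pbar * Pdag)).mulVec ubar) :
    ∀ W b, J Wstar bstar ≤ J W b :=
  stmt_6_general G U ubar Pbar hPbar Pdag hPdag J hJ Wstar hW bstar hb
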